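/- arXiv:2006.10115 — 9 statements merged into one kernel-verified Lean document; each statement's English description precedes it below -/
import Mathlib

section
/- In the FHMS model, the divergence of the vector field multiplied by the Dulac function Ψ(f,m) = 1/(fm) equals the constant -α < 0 on the open first quadrant; consequently (by the Dulac criterion) the system has no periodic orbits lying entirely in the open first quadrant. -/
/-!
Multiplying the equations by the Dulac function `Ψ = 1/(fm)`, along a trajectory
`Ψ F₁ · m' - Ψ F₂ · f' = 0`; expanded, this says that `α f m'` is an exact derivative, so a periodic
orbit encloses zero signed area `∫ f dm` (the Green's-theorem step of Dulac's criterion, with the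
divergence `-α` appearing as the factor `α`). As `∫ f df`, `∫ m dm` and `∫ d(fm)` vanish too,
`∫ ℓ dℓ' = 0` for all linear forms `ℓ, ℓ'` in `(f, m)`. Now `(1 - r) F₁ - r F₂` is the linear form
`r (1 - s) m - (1 - r) (1 + h) f`, so the square of this form integrates to zero over a period: a
periodic orbit lies on a line through the origin, where the system becomes a scalar autonomous
equation, and periodic solutions of those are constant.
-/

open intervalIntegral MeasureTheory Set Function

theorem Function.Periodic.integral_eq_zero_of_hasDerivAt {V e : ℝ → ℝ} {T : ℝ}
    (hV : Periodic V T) (hderiv : ∀ t, HasDerivAt V (e t) t) (he : Continuous e) :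
    ∫ t in (0 : ℝ)..T, e t = 0 := by
  rw [integral_eq_sub_of_hasDerivAt (fun t _ => hderiv t) (he.intervalIntegrable _ _), hV.eq,
    sub_self]

theorem Function.Periodic.eq_zero_of_integral_sq_eq_zero {g : ℝ → ℝ} {T : ℝ}
    (hg : Periodic g T) (hT : 0 < T) (hcont : Continuous g)
    (hint : ∫ t in (0 : ℝ)..T, g t ^ 2 = 0) : g = 0 := by
  have hae : (fun t => g t ^ 2) =ᵐ[volume.restrict (Ioc 0 T)] 0 :=
    (integral_eq_zero_iff_of_le_of_nonneg_ae hT.le (.of_forall fun t => sq_nonneg (g t))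
      ((hcont.pow 2).intervalIntegrable _ _)).1 hint
  have hsq : EqOn (fun t => g t ^ 2) 0 (Ioc 0 T) :=
    Measure.eqOn_of_ae_eq hae (by fun_prop) continuousOn_const <| by
      rw [interior_Ioc, closure_Ioo hT.ne]
      exact Ioc_subset_Icc_self
  funext t
  obtain ⟨u, hu, hgu⟩ := hg.exists_mem_Ioc hT t 0
  rw [zero_add] at hu
  simpa [hgu] using hsq hu

theorem integral_linear_mul_linear_deriv_eq {x y x' y' : ℝ → ℝ} {T : ℝ}
    (hx : ∀ t, HasDerivAt x (x' t) t) (hy : ∀ t, HasDerivAt y (y' t) t)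
    (hx' : Continuous x') (hy' : Continuous y') (hxT : Periodic x T) (hyT : Periodic y T)
    (p q c d : ℝ) :
    ∫ t in (0 : ℝ)..T, (p * x t + q * y t) * (c * x' t + d * y' t) =
      (p * d - q * c) * ∫ t in (0 : ℝ)..T, x t * y' t := by
  have hxc : Continuous x := continuous_iff_continuousAt.2 fun t => (hx t).continuousAt
  have hyc : Continuous y := continuous_iff_continuousAt.2 fun t => (hy t).continuousAt
  have hexact : ∫ t in (0 : ℝ)..T, (p * x t + q * y t) * (c * x' t + d * y' t)
      - (p * d - q * c) * (x t * y' t) = 0 := by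
    refine Periodic.integral_eq_zero_of_hasDerivAt
      (V := fun t => p * c / 2 * (x t * x t) + (q * d / 2 * (y t * y t) + q * c * (x t * y t)))
      (fun t => by simp only [hxT t, hyT t]) (fun t => ?_) (by fun_prop)
    refine ((((hx t).mul (hx t)).const_mul (p * c / 2)).add ((((hy t).mul (hy t)).const_mul
      (q * d / 2)).add (((hx t).mul (hy t)).const_mul (q * c)))).congr_deriv ?_
    ring
  rwa [intervalIntegral.integral_sub (Continuous.intervalIntegrable (by fun_prop) _ _)
    (Continuous.intervalIntegrable (by fun_prop) _ _), intervalIntegral.integral_const_mul,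
    sub_eq_zero] at hexact

theorem Function.Periodic.const_of_hasDerivAt_comp {f p : ℝ → ℝ} {T : ℝ}
    (hf : Periodic f T) (hT : 0 < T) (hp : Continuous p) (hderiv : ∀ t, HasDerivAt f (p (f t)) t)
    (t₁ t₂ : ℝ) : f t₁ = f t₂ := by
  have hfc : Continuous f := continuous_iff_continuousAt.2 fun t => (hderiv t).continuousAt
  -- `∫ (p ∘ f)² = ∫ (P ∘ f)'` for a primitive `P` of `p`, and `P ∘ f` is periodic
  have hint : ∫ t in (0 : ℝ)..T, p (f t) ^ 2 = 0 :=
    (hf.comp fun x => ∫ u in (0 : ℝ)..x, p u).integral_eq_zero_of_hasDerivAt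
      (fun t => by simpa [sq] using ((hp.integral_hasStrictDerivAt 0 (f t)).hasDerivAt.comp t
        (hderiv t))) (by fun_prop)
  have hzero : p ∘ f = 0 := (hf.comp p).eq_zero_of_integral_sq_eq_zero hT (by fun_prop) hint
  refine is_const_of_deriv_eq_zero (fun t => (hderiv t).differentiableAt) (fun t => ?_) t₁ t₂
  simpa using (hderiv t).deriv.trans (congrFun hzero t)

theorem deriv_logisticFlux_div_mul_eq {k c x y : ℝ} (hx : x ≠ 0) (hy : y ≠ 0) :
    deriv (fun x => (k * x * y * (1 - x - y) + c * x) / (x * y)) x = -k := by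
  have hloc : (fun x => (k * x * y * (1 - x - y) + c * x) / (x * y)) =ᶠ[nhds x]
      fun x => k * (1 - x - y) + c / y := by
    filter_upwards [eventually_ne_nhds hx] with x hx
    field_simp
  rw [hloc.deriv_eq]
  exact (((((hasDerivAt_id x).const_sub 1).sub_const y).const_mul k).add_const (c / y)).deriv.trans
    (by ring)

section FHMS

variable {r α h s T : ℝ} {f m : ℝ → ℝ}

theorem fhms_integral_mul_deriv_eq_zero (hα : α ≠ 0)
    (hf : ∀ t, HasDerivAt f (r * α * f t * m t * (1 - f t - m t) - (1 + h) * f t) t)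
    (hm : ∀ t, HasDerivAt m ((1 - r) * α * f t * m t * (1 - f t - m t) + (s - 1) * m t) t)
    (hf0 : ∀ t, f t ≠ 0) (hm0 : ∀ t, m t ≠ 0) (hfT : Periodic f T) (hmT : Periodic m T) :
    ∫ t in (0 : ℝ)..T, f t * ((1 - r) * α * f t * m t * (1 - f t - m t) + (s - 1) * m t) = 0 := by
  have hfc : Continuous f := continuous_iff_continuousAt.2 fun t => (hf t).continuousAt
  have hmc : Continuous m := continuous_iff_continuousAt.2 fun t => (hm t).continuousAt
  refine (mul_eq_zero.1 ?_).resolve_left hα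
  rw [← intervalIntegral.integral_const_mul]
  refine Periodic.integral_eq_zero_of_hasDerivAt (T := T)
    (V := fun t => α * (r * m t - (1 - r) * f t + (1 - r) / 2 * (f t * f t) - r / 2 * (m t * m t)
      + (1 - r) * (f t * m t)) + (1 - s) * Real.log (f t) - (1 + h) * Real.log (m t))
    (e := fun t => α * (f t * ((1 - r) * α * f t * m t * (1 - f t - m t) + (s - 1) * m t)))
    (fun t => by simp only [hfT t, hmT t]) (fun t => ?_) (by fun_prop)
  refine (((((((hm t).const_mul r).sub ((hf t).const_mul (1 - r))).add
    (((hf t).mul (hf t)).const_mul ((1 - r) / 2))).sub (((hm t).mul (hm t)).const_mul (r / 2))).add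
    (((hf t).mul (hm t)).const_mul (1 - r))).const_mul α |>.add
    (((hf t).log (hf0 t)).const_mul (1 - s)) |>.sub
    (((hm t).log (hm0 t)).const_mul (1 + h))).congr_deriv ?_
  field_simp [hf0 t, hm0 t]
  ring

theorem fhms_periodic_trajectory_const (hr : r ≠ 0) (hs : s ≠ 1) (hα : α ≠ 0) (hT : 0 < T)
    (hf : ∀ t, HasDerivAt f (r * α * f t * m t * (1 - f t - m t) - (1 + h) * f t) t)
    (hm : ∀ t, HasDerivAt m ((1 - r) * α * f t * m t * (1 - f t - m t) + (s - 1) * m t) t)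
    (hf0 : ∀ t, f t ≠ 0) (hm0 : ∀ t, m t ≠ 0) (hfT : Periodic f T) (hmT : Periodic m T)
    (t₁ t₂ : ℝ) : f t₁ = f t₂ ∧ m t₁ = m t₂ := by
  have hfc : Continuous f := continuous_iff_continuousAt.2 fun t => (hf t).continuousAt
  have hmc : Continuous m := continuous_iff_continuousAt.2 fun t => (hm t).continuousAt
  set a := (1 - r) * (1 + h)
  set b := r * (1 - s)
  have hb : b ≠ 0 := mul_ne_zero hr (sub_ne_zero.2 hs.symm)
  have hline : (fun t => b * m t - a * f t) = 0 := by
    refine Periodic.eq_zero_of_integral_sq_eq_zero (fun t => by simp only [hfT t, hmT t]) hT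
      (by fun_prop) ?_
    calc ∫ t in (0 : ℝ)..T, (b * m t - a * f t) ^ 2
        = ∫ t in (0 : ℝ)..T, (-a * f t + b * m t) *
            ((1 - r) * (r * α * f t * m t * (1 - f t - m t) - (1 + h) * f t)
              + -r * ((1 - r) * α * f t * m t * (1 - f t - m t) + (s - 1) * m t)) :=
          integral_congr fun t _ => by ring
      _ = (-a * -r - b * (1 - r)) * ∫ t in (0 : ℝ)..T,
            f t * ((1 - r) * α * f t * m t * (1 - f t - m t) + (s - 1) * m t) :=
          integral_linear_mul_linear_deriv_eq hf hm (by fun_prop) (by fun_prop) hfT hmT _ _ _ _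
      _ = 0 := by rw [fhms_integral_mul_deriv_eq_zero hα hf hm hf0 hm0 hfT hmT, mul_zero]
  have hmf : ∀ t, m t = a / b * f t := fun t => by
    have := congrFun hline t
    rw [Pi.zero_apply] at this
    field_simp
    linear_combination this
  have hfconst : ∀ t₁ t₂, f t₁ = f t₂ :=
    hfT.const_of_hasDerivAt_comp hT
      (p := fun x => r * α * x * (a / b * x) * (1 - x - a / b * x) - (1 + h) * x) (by fun_prop)
      fun t => by simpa only [hmf t] using hf t
  exact ⟨hfconst t₁ t₂, by rw [hmf, hmf, hfconst t₁ t₂]⟩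

end FHMS

theorem fhms_dulac_no_periodic_orbits_general (r α h s : ℝ)
    (hr : 0 < r) (hα : 0 < α) (hs1 : s < 1)
    (F1 F2 : ℝ → ℝ → ℝ)
    (hF1 : ∀ f m, F1 f m = r * α * f * m * (1 - f - m) - (1 + h) * f)
    (hF2 : ∀ f m, F2 f m = (1 - r) * α * f * m * (1 - f - m) + (s - 1) * m) :
    (∀ f m : ℝ, 0 < f → 0 < m →
      deriv (fun x => F1 x m / (x * m)) f + deriv (fun y => F2 f y / (f * y)) m = -α ∧
      -α < 0) ∧
    ¬ ∃ (γ : ℝ → ℝ × ℝ) (T : ℝ), 0 < T ∧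
        (∀ t, HasDerivAt (fun u => (γ u).1) (F1 (γ t).1 (γ t).2) t) ∧
        (∀ t, HasDerivAt (fun u => (γ u).2) (F2 (γ t).1 (γ t).2) t) ∧
        (∀ t, 0 < (γ t).1 ∧ 0 < (γ t).2) ∧
        (∀ t, γ (t + T) = γ t) ∧
        (∃ t₁ t₂, γ t₁ ≠ γ t₂) := by
  refine ⟨fun f m hf hm => ⟨?_, neg_lt_zero.2 hα⟩, ?_⟩
  · have hF1' : (fun x => F1 x m / (x * m)) =
        fun x => (r * α * x * m * (1 - x - m) + -(1 + h) * x) / (x * m) :=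
      funext fun x => by rw [hF1]; ring
    have hF2' : (fun y => F2 f y / (f * y)) =
        fun y => ((1 - r) * α * y * f * (1 - y - f) + (s - 1) * y) / (y * f) :=
      funext fun y => by rw [hF2]; ring
    rw [hF1', hF2', deriv_logisticFlux_div_mul_eq hf.ne' hm.ne', deriv_logisticFlux_div_mul_eq hm.ne' hf.ne']
    ring
  · rintro ⟨γ, T, hT, hγ₁, hγ₂, hpos, hper, t₁, t₂, hne⟩
    obtain ⟨h₁, h₂⟩ := fhms_periodic_trajectory_const (f := fun t => (γ t).1)
      (m := fun t => (γ t).2) hr.ne' hs1.ne hα.ne' hT (fun t => hF1 _ _ ▸ hγ₁ t)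
      (fun t => hF2 _ _ ▸ hγ₂ t)
      (fun t => (hpos t).1.ne') (fun t => (hpos t).2.ne') (fun t => by simp only [hper t])
      (fun t => by simp only [hper t]) t₁ t₂
    exact hne (Prod.ext h₁ h₂)

/-- FHMS model: Dulac function Ψ = 1/(fm) gives constant divergence -α < 0 on the
open first quadrant, hence no periodic orbits entirely in the open first quadrant. -/
theorem fhms_dulac_no_periodic_orbits (r α h s : ℝ)
    (hr : 0 < r) (hr1 : r < 1) (hα : 0 < α) (hh : 0 ≤ h) (hs0 : 0 ≤ s) (hs1 : s < 1)
    (F1 F2 : ℝ → ℝ → ℝ)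
    (hF1 : ∀ f m, F1 f m = r * α * f * m * (1 - f - m) - (1 + h) * f)
    (hF2 : ∀ f m, F2 f m = (1 - r) * α * f * m * (1 - f - m) + (s - 1) * m) :
    (∀ f m : ℝ, 0 < f → 0 < m →
      deriv (fun x => F1 x m / (x * m)) f + deriv (fun y => F2 f y / (f * y)) m = -α ∧
      -α < 0) ∧
    ¬ ∃ (γ : ℝ → ℝ × ℝ) (T : ℝ), 0 < T ∧
        (∀ t, HasDerivAt (fun u => (γ u).1) (F1 (γ t).1 (γ t).2) t) ∧
        (∀ t, HasDerivAt (fun u => (γ u).2) (F2 (γ t).1 (γ t).2) t) ∧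
        (∀ t, 0 < (γ t).1 ∧ 0 < (γ t).2) ∧
        (∀ t, γ (t + T) = γ t) ∧
        (∃ t₁ t₂, γ t₁ ≠ γ t₂) :=
  fhms_dulac_no_periodic_orbits_general r α h s hr hα hs1 F1 F2 hF1 hF2
end

section
/- For the FHMS model with h = 0 and s = 0, the quantity ∂/∂f(F1/(fm)) + ∂/∂m(F2/(fm)) equals -α < 0 everywhere on the open first quadrant, so the system has no limit cycles there. -/
/-!
Dividing by the Dulac function `f m` turns each component into an affine function of its own
variable, so the divergence is the constant `-(r α) - (1 - r) α = -α`.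

Periodic orbits are excluded without Green's theorem: the combination
`u = (1 - r) f - r m` satisfies `u' = -u`, so a periodic solution has `u ≡ 0`, i.e. it lies on
the line `m = ((1 - r) / r) f`. There `f` solves an autonomous scalar equation `f' = φ(f)`, and
a periodic solution of such an equation is constant: with `Φ' = φ`, the function `Φ ∘ f` is
periodic with derivative `φ(f)² ≥ 0`, hence constant, hence `φ(f) ≡ 0`.
-/

open Filter Topology Function

theorem deriv_fhms_component_div_mul (a c : ℝ) {x : ℝ} (hx : x ≠ 0) (hc : c ≠ 0) :
    deriv (fun y => (a * y * c * (1 - y - c) - y) / (y * c)) x = -a := by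
  have h_affine : (fun y => (a * y * c * (1 - y - c) - y) / (y * c)) =ᶠ[𝓝 x]
      fun y => -a * y + (a * (1 - c) - c⁻¹) := by
    filter_upwards [eventually_ne_nhds hx] with y hy
    field_simp
    ring
  rw [h_affine.deriv_eq]
  simp

theorem Function.Periodic.eq_of_monotone {α β : Type*} [AddCommGroup α] [LinearOrder α]
    [IsOrderedAddMonoid α] [Archimedean α] [PartialOrder β] {g : α → β} {c : α}
    (hg : Periodic g c) (hc : 0 < c) (hmono : Monotone g) (x y : α) : g x = g y := by
  have h_zero : ∀ x, g x = g 0 := by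
    intro x
    obtain ⟨z, hz, hxz⟩ := hg.exists_mem_Ico₀ hc x
    rw [hxz]
    exact le_antisymm (hg.eq ▸ hmono hz.2.le) (hmono hz.1)
  rw [h_zero x, h_zero y]

theorem Function.Periodic.eq_zero_of_hasDerivAt_const_mul {u : ℝ → ℝ} {k T : ℝ} (hk : k ≠ 0)
    (hT : T ≠ 0) (hu : Periodic u T) (hderiv : ∀ t, HasDerivAt u (k * u t) t) (t : ℝ) :
    u t = 0 := by
  have h_const : ∀ t, u t * Real.exp (-k * t) = u 0 := by
    have h_deriv : ∀ t, HasDerivAt (fun s => u s * Real.exp (-k * s)) 0 t := by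
      intro t
      exact ((hderiv t).mul ((hasDerivAt_id t).const_mul (-k)).exp).congr_deriv
        (by simp only [id, mul_one]; ring)
    intro t
    simpa using is_const_of_deriv_eq_zero (fun s => (h_deriv s).differentiableAt)
      (fun s => (h_deriv s).deriv) t 0
  have h_exp : Real.exp (-k * T) ≠ 1 := by
    rw [Ne, Real.exp_eq_one_iff]
    exact mul_ne_zero (neg_ne_zero.mpr hk) hT
  have hu0 : u 0 = 0 := by
    have h := h_const T
    rw [hu.eq] at h
    have : u 0 * (Real.exp (-k * T) - 1) = 0 := by linarith
    exact (mul_eq_zero.mp this).resolve_right (sub_ne_zero.mpr h_exp)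
  have h := h_const t
  rw [hu0] at h
  exact (mul_eq_zero.mp h).resolve_right (Real.exp_ne_zero _)

theorem Function.Periodic.eq_of_hasDerivAt_comp {φ x : ℝ → ℝ} {T : ℝ} (hφ : Continuous φ)
    (hT : 0 < T) (hx : Periodic x T) (hderiv : ∀ t, HasDerivAt x (φ (x t)) t) (s t : ℝ) :
    x s = x t := by
  set Φ : ℝ → ℝ := fun y => ∫ z in (0 : ℝ)..y, φ z
  have hΦ : ∀ t, HasDerivAt (Φ ∘ x) (φ (x t) * φ (x t)) t := fun t =>
    (hφ.integral_hasStrictDerivAt 0 (x t)).hasDerivAt.comp t (hderiv t)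
  have hΦ_mono : Monotone (Φ ∘ x) :=
    monotone_of_hasDerivAt_nonneg hΦ fun t => mul_self_nonneg _
  have hΦ_const : Φ ∘ x = fun _ => Φ (x 0) :=
    funext fun t => (hx.comp Φ).eq_of_monotone hT hΦ_mono t 0
  have h_stationary : ∀ t, φ (x t) = 0 := by
    intro t
    have h := (hΦ t).unique (hΦ_const ▸ hasDerivAt_const t (Φ (x 0)))
    exact mul_self_eq_zero.mp h
  exact is_const_of_deriv_eq_zero (fun t => (hderiv t).differentiableAt)
    (fun t => by rw [(hderiv t).deriv, h_stationary]) s t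

theorem fhms_h0_s0_dulac_no_limit_cycles_general (r α : ℝ)
    (hr : 0 < r) (hα : 0 < α)
    (F1 F2 : ℝ → ℝ → ℝ)
    (hF1 : ∀ f m, F1 f m = r * α * f * m * (1 - f - m) - f)
    (hF2 : ∀ f m, F2 f m = (1 - r) * α * f * m * (1 - f - m) - m) :
    (∀ f m : ℝ, 0 < f → 0 < m →
      deriv (fun x => F1 x m / (x * m)) f + deriv (fun y => F2 f y / (f * y)) m = -α ∧
      -α < 0) ∧
    ¬ ∃ (γ : ℝ → ℝ × ℝ) (T : ℝ), 0 < T ∧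
        (∀ t, HasDerivAt (fun u => (γ u).1) (F1 (γ t).1 (γ t).2) t) ∧
        (∀ t, HasDerivAt (fun u => (γ u).2) (F2 (γ t).1 (γ t).2) t) ∧
        (∀ t, 0 < (γ t).1 ∧ 0 < (γ t).2) ∧
        (∀ t, γ (t + T) = γ t) ∧
        (∃ t₁ t₂, γ t₁ ≠ γ t₂) := by
  simp only [hF1, hF2]
  refine ⟨fun f m hf hm => ⟨?_, neg_neg_of_pos hα⟩, ?_⟩
  · have h_swap : (fun y => ((1 - r) * α * f * y * (1 - f - y) - y) / (f * y)) =
        fun y => ((1 - r) * α * y * f * (1 - y - f) - y) / (y * f) := by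
      funext y
      ring
    rw [h_swap, deriv_fhms_component_div_mul _ _ hf.ne' hm.ne',
      deriv_fhms_component_div_mul _ _ hm.ne' hf.ne']
    ring
  · rintro ⟨γ, T, hT, hf', hm', -, hper, t₁, t₂, hne⟩
    have h_line : ∀ t, (1 - r) * (γ t).1 - r * (γ t).2 = 0 :=
      Periodic.eq_zero_of_hasDerivAt_const_mul (u := fun t => (1 - r) * (γ t).1 - r * (γ t).2)
        (k := -1) (by norm_num) hT.ne' (fun t => by simp only [hper t])
        (fun t => (((hf' t).const_mul (1 - r)).sub ((hm' t).const_mul r)).congr_deriv (by ring))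
    set c := (1 - r) / r
    have hm : ∀ t, (γ t).2 = c * (γ t).1 := fun t => by
      rw [div_mul_eq_mul_div, eq_div_iff hr.ne']
      linarith [h_line t]
    have hf_const : ∀ s t, (γ s).1 = (γ t).1 :=
      Periodic.eq_of_hasDerivAt_comp (φ := fun x => r * α * x * (c * x) * (1 - x - c * x) - x)
        (by fun_prop) hT (fun t => by simp only [hper t]) (fun t => hm t ▸ hf' t)
    exact hne (Prod.ext (hf_const t₁ t₂) (by rw [hm, hm, hf_const t₁ t₂]))

/-- FHMS model with h = 0 and s = 0: the Dulac expression equals -α < 0 on the open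
first quadrant, so there are no limit cycles (periodic orbits) there. -/
theorem fhms_h0_s0_dulac_no_limit_cycles (r α : ℝ)
    (hr : 0 < r) (hr1 : r < 1) (hα : 0 < α)
    (F1 F2 : ℝ → ℝ → ℝ)
    (hF1 : ∀ f m, F1 f m = r * α * f * m * (1 - f - m) - f)
    (hF2 : ∀ f m, F2 f m = (1 - r) * α * f * m * (1 - f - m) - m) :
    (∀ f m : ℝ, 0 < f → 0 < m →
      deriv (fun x => F1 x m / (x * m)) f + deriv (fun y => F2 f y / (f * y)) m = -α ∧
      -α < 0) ∧
    ¬ ∃ (γ : ℝ → ℝ × ℝ) (T : ℝ), 0 < T ∧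
        (∀ t, HasDerivAt (fun u => (γ u).1) (F1 (γ t).1 (γ t).2) t) ∧
        (∀ t, HasDerivAt (fun u => (γ u).2) (F2 (γ t).1 (γ t).2) t) ∧
        (∀ t, 0 < (γ t).1 ∧ 0 < (γ t).2) ∧
        (∀ t, γ (t + T) = γ t) ∧
        (∃ t₁ t₂, γ t₁ ≠ γ t₂) :=
  fhms_h0_s0_dulac_no_limit_cycles_general r α hr hα F1 F2 hF1 hF2
end

section
/- Every interior equilibrium of the FHMS model lies on the ray m = μ f, where μ = (1-r)(1+h)/(r(1-s)), and the f-coordinate satisfies the quadratic (1+μ) f² - f + (1+h)/(r α μ) = 0; hence the interior equilibria are f*_{1,2} = [1 ± sqrt(1 - 4(1+μ)(1+h)/(r α μ))] / (2(1+μ)). -/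
/-!
Subtracting `(1 - r)` times the first equilibrium equation from `r` times the second cancels the
common mass-action term `α f m (1 - f - m)`, leaving a linear relation between `f` and `m`: the
equilibrium lies on the ray `m = μ f`. Substituting this into the first equation and dividing by
`f` leaves a quadratic in `f`, whose roots are given by the quadratic formula, its discriminant
being a square because a root exists.
-/

theorem eq_quadratic_roots_of_quadratic_eq_zero {a b c x : ℝ} (ha : a ≠ 0)
    (h : a * (x * x) + b * x + c = 0) :
    x = (-b + √(discrim a b c)) / (2 * a) ∨ x = (-b - √(discrim a b c)) / (2 * a) := by
  have hdisc_nonneg : 0 ≤ discrim a b c := by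
    rw [discrim_eq_sq_of_quadratic_eq_zero h]
    positivity
  exact (quadratic_eq_zero_iff ha (Real.mul_self_sqrt hdisc_nonneg).symm x).mp h

section FHMS

variable {r α h s f m : ℝ}

theorem fhms_equilibrium_eq_mul {μ : ℝ} (hr : r ≠ 0) (hs : s ≠ 1)
    (hμ : μ = (1 - r) * (1 + h) / (r * (1 - s)))
    (hf_eq : r * α * f * m * (1 - f - m) - (1 + h) * f = 0)
    (hm_eq : (1 - r) * α * f * m * (1 - f - m) + (s - 1) * m = 0) :
    m = μ * f := by
  have hs' : 1 - s ≠ 0 := sub_ne_zero.mpr hs.symm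
  rw [hμ]
  field_simp
  linear_combination (1 - r) * hf_eq - r * hm_eq

theorem fhms_quadratic_of_equilibrium_on_ray {μ : ℝ} (hr : r ≠ 0) (hα : α ≠ 0) (hμ : μ ≠ 0)
    (hf : f ≠ 0) (hf_eq : r * α * f * (μ * f) * (1 - f - μ * f) - (1 + h) * f = 0) :
    (1 + μ) * (f * f) + -1 * f + (1 + h) / (r * α * μ) = 0 := by
  have hcancelled : r * α * μ * f * (1 - (1 + μ) * f) = 1 + h :=
    mul_left_cancel₀ hf (by linear_combination hf_eq)
  field_simp
  linear_combination -hcancelled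

end FHMS

theorem fhms_interior_equilibria_general (r α h s μ : ℝ)
    (hr : 0 < r) (hα : 0 < α) (hs1 : s < 1)
    (hμ : μ = (1 - r) * (1 + h) / (r * (1 - s))) :
    ∀ f m : ℝ, 0 < f → 0 < m →
      r * α * f * m * (1 - f - m) - (1 + h) * f = 0 →
      (1 - r) * α * f * m * (1 - f - m) + (s - 1) * m = 0 →
      m = μ * f ∧
      (1 + μ) * f ^ 2 - f + (1 + h) / (r * α * μ) = 0 ∧
      (f = (1 + Real.sqrt (1 - 4 * (1 + μ) * (1 + h) / (r * α * μ))) / (2 * (1 + μ)) ∨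
       f = (1 - Real.sqrt (1 - 4 * (1 + μ) * (1 + h) / (r * α * μ))) / (2 * (1 + μ))) := by
  intro f m hf hm hf_eq hm_eq
  have hmf : m = μ * f := fhms_equilibrium_eq_mul hr.ne' hs1.ne hμ hf_eq hm_eq
  have hμ_pos : 0 < μ := pos_of_mul_pos_left (hmf ▸ hm) hf.le
  have hquad := fhms_quadratic_of_equilibrium_on_ray hr.ne' hα.ne' hμ_pos.ne' hf.ne'
    (hmf ▸ hf_eq)
  refine ⟨hmf, by linear_combination hquad, ?_⟩
  have hdisc : discrim (1 + μ) (-1) ((1 + h) / (r * α * μ)) =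
      1 - 4 * (1 + μ) * (1 + h) / (r * α * μ) := by
    unfold discrim
    ring
  have hroots := eq_quadratic_roots_of_quadratic_eq_zero (by positivity) hquad
  rwa [hdisc, neg_neg] at hroots

/-- Every interior equilibrium of the FHMS model lies on m = μ f with
(1+μ) f² - f + (1+h)/(rαμ) = 0, hence f is one of the two quadratic roots. -/
theorem fhms_interior_equilibria (r α h s μ : ℝ)
    (hr : 0 < r) (hr1 : r < 1) (hα : 0 < α) (hh : 0 ≤ h) (hs0 : 0 ≤ s) (hs1 : s < 1)
    (hμ : μ = (1 - r) * (1 + h) / (r * (1 - s))) :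
    ∀ f m : ℝ, 0 < f → 0 < m →
      r * α * f * m * (1 - f - m) - (1 + h) * f = 0 →
      (1 - r) * α * f * m * (1 - f - m) + (s - 1) * m = 0 →
      m = μ * f ∧
      (1 + μ) * f ^ 2 - f + (1 + h) / (r * α * μ) = 0 ∧
      (f = (1 + Real.sqrt (1 - 4 * (1 + μ) * (1 + h) / (r * α * μ))) / (2 * (1 + μ)) ∨
       f = (1 - Real.sqrt (1 - 4 * (1 + μ) * (1 + h) / (r * α * μ))) / (2 * (1 + μ))) :=
  fhms_interior_equilibria_general r α h s μ hr hα hs1 hμ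
end

section
/- Two distinct positive interior equilibria of the FHMS model exist if and only if r α μ > 4(1+μ)(1+h), where μ = (1-r)(1+h)/(r(1-s)); equivalently, the discriminant 1 - 4(1+μ)(1+h)/(r α μ) is positive. -/
/-!
On the open quadrant the equilibrium equations can be divided by `f` and `m`; eliminating
`α (1 - f - m)` between them leaves `m = μ f`, and substituting back gives the quadratic
`r α μ (1 + μ) f² - r α μ f + (1 + h) = 0`. Its coefficients alternate in sign, so every real
root is positive and yields an interior equilibrium. Hence two distinct interior equilibria exist
iff the quadratic has two distinct real roots, i.e. iff its discriminant
`r α μ (r α μ - 4 (1 + μ) (1 + h))` is positive.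
-/

theorem exists_ne_quadratic_eq_zero_iff {a b c : ℝ} (ha : a ≠ 0) :
    (∃ x y, x ≠ y ∧ a * (x * x) + b * x + c = 0 ∧ a * (y * y) + b * y + c = 0) ↔
      0 < discrim a b c := by
  constructor
  · rintro ⟨x, y, hxy, hx, hy⟩
    refine lt_of_le_of_ne ?_ fun hd => hxy ?_
    · rw [discrim_eq_sq_of_quadratic_eq_zero hx]
      positivity
    · rw [quadratic_eq_zero_iff_of_discrim_eq_zero ha hd.symm] at hx hy
      rw [hx, hy]
  · intro hd
    have hs : discrim a b c = √(discrim a b c) * √(discrim a b c) :=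
      (Real.mul_self_sqrt hd.le).symm
    have hs0 : √(discrim a b c) ≠ 0 := (Real.sqrt_pos.2 hd).ne'
    refine ⟨_, _, ?_, (quadratic_eq_zero_iff ha hs _).2 (Or.inl rfl),
      (quadratic_eq_zero_iff ha hs _).2 (Or.inr rfl)⟩
    rw [Ne, div_left_inj' (mul_ne_zero two_ne_zero ha)]
    intro h
    exact hs0 (by linarith)

theorem pos_of_quadratic_eq_zero {a b c x : ℝ} (ha : 0 ≤ a) (hb : b ≤ 0) (hc : 0 < c)
    (hx : a * (x * x) + b * x + c = 0) : 0 < x := by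
  by_contra! hx0
  nlinarith [mul_nonneg ha (mul_self_nonneg x), mul_nonneg_of_nonpos_of_nonpos hb hx0]

theorem exists_pair_ne_iff_of_graph {X Y : Type*} {P : X × Y → Prop} {R : X → Prop}
    {g : X → Y} (hP : ∀ p, P p ↔ p.2 = g p.1 ∧ R p.1) :
    (∃ p q, p ≠ q ∧ P p ∧ P q) ↔ ∃ x y, x ≠ y ∧ R x ∧ R y := by
  constructor
  · rintro ⟨p, q, hpq, hp, hq⟩
    rw [hP] at hp hq
    refine ⟨p.1, q.1, fun h => hpq (Prod.ext h ?_), hp.2, hq.2⟩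
    rw [hp.1, hq.1, h]
  · rintro ⟨x, y, hxy, hx, hy⟩
    exact ⟨(x, g x), (y, g y), fun h => hxy (congrArg Prod.fst h),
      (hP _).2 ⟨rfl, hx⟩, (hP _).2 ⟨rfl, hy⟩⟩

/-- `p = (f, m)`; the two equations say that `df/dt` and `dm/dt` vanish. -/
def IsInteriorEquilibrium (r α h s : ℝ) (p : ℝ × ℝ) : Prop :=
  0 < p.1 ∧ 0 < p.2 ∧
    r * α * p.1 * p.2 * (1 - p.1 - p.2) - (1 + h) * p.1 = 0 ∧
    (1 - r) * α * p.1 * p.2 * (1 - p.1 - p.2) + (s - 1) * p.2 = 0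

theorem isInteriorEquilibrium_iff {r α h s μ : ℝ} (hr : 0 < r) (hα : 0 ≤ α) (hh : 0 < 1 + h)
    (hs : s < 1) (hμ : 0 < μ) (hkey : r * (1 - s) * μ = (1 - r) * (1 + h)) (p : ℝ × ℝ) :
    IsInteriorEquilibrium r α h s p ↔ p.2 = μ * p.1 ∧
      r * α * μ * (1 + μ) * (p.1 * p.1) + -(r * α * μ) * p.1 + (1 + h) = 0 := by
  obtain ⟨f, m⟩ := p
  simp only [IsInteriorEquilibrium]
  have hrs : r * (1 - s) ≠ 0 := (mul_pos hr (sub_pos.2 hs)).ne'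
  constructor
  · rintro ⟨hf, hm, e1, e2⟩
    have h1 : r * α * m * (1 - f - m) = 1 + h :=
      mul_right_cancel₀ hf.ne' (by linear_combination e1)
    have h2 : (1 - r) * α * f * (1 - f - m) = 1 - s :=
      mul_right_cancel₀ hm.ne' (by linear_combination e2)
    have hmf : m = μ * f :=
      mul_left_cancel₀ hrs (by linear_combination (1 - r) * f * h1 - r * m * h2 - f * hkey)
    subst hmf
    exact ⟨rfl, by linear_combination -h1⟩
  · rintro ⟨rfl, hQ⟩
    have hf : 0 < f := pos_of_quadratic_eq_zero (by positivity) (neg_nonpos.2 (by positivity)) hh hQ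
    refine ⟨hf, by positivity, by linear_combination -f * hQ, ?_⟩
    have hrμ : r * μ ≠ 0 := by positivity
    exact mul_left_cancel₀ hrμ (by linear_combination -(1 - r) * μ * f * hQ - μ * f * hkey)

theorem fhms_two_interior_equilibria_iff_general (r α h s μ : ℝ)
    (hr : 0 < r) (hr1 : r < 1) (hα : 0 < α) (hh : 0 ≤ h) (hs1 : s < 1)
    (hμ : μ = (1 - r) * (1 + h) / (r * (1 - s))) :
    ((∃ p q : ℝ × ℝ, p ≠ q ∧
        (0 < p.1 ∧ 0 < p.2 ∧
          r * α * p.1 * p.2 * (1 - p.1 - p.2) - (1 + h) * p.1 = 0 ∧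
          (1 - r) * α * p.1 * p.2 * (1 - p.1 - p.2) + (s - 1) * p.2 = 0) ∧
        (0 < q.1 ∧ 0 < q.2 ∧
          r * α * q.1 * q.2 * (1 - q.1 - q.2) - (1 + h) * q.1 = 0 ∧
          (1 - r) * α * q.1 * q.2 * (1 - q.1 - q.2) + (s - 1) * q.2 = 0)) ↔
      r * α * μ > 4 * (1 + μ) * (1 + h)) ∧
    (r * α * μ > 4 * (1 + μ) * (1 + h) ↔ 0 < 1 - 4 * (1 + μ) * (1 + h) / (r * α * μ)) := by
  have hrs : 0 < r * (1 - s) := mul_pos hr (sub_pos.2 hs1)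
  have hμpos : 0 < μ := hμ ▸ div_pos (mul_pos (sub_pos.2 hr1) (by linarith)) hrs
  have hkey : r * (1 - s) * μ = (1 - r) * (1 + h) := by
    rw [hμ, mul_div_cancel₀ _ hrs.ne']
  have hB : 0 < r * α * μ := by positivity
  have hdisc : discrim (r * α * μ * (1 + μ)) (-(r * α * μ)) (1 + h) =
      r * α * μ * (r * α * μ - 4 * (1 + μ) * (1 + h)) := by
    unfold discrim
    ring
  refine ⟨?_, (sub_pos.trans (div_lt_one hB)).symm⟩
  refine (exists_pair_ne_iff_of_graph (isInteriorEquilibrium_iff hr hα.le (by linarith) hs1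
    hμpos hkey)).trans ((exists_ne_quadratic_eq_zero_iff (by positivity)).trans ?_)
  rw [hdisc, mul_pos_iff_of_pos_left hB, sub_pos, gt_iff_lt]

/-- Two distinct positive interior equilibria of the FHMS model exist iff
r α μ > 4(1+μ)(1+h), equivalently the discriminant is positive. -/
theorem fhms_two_interior_equilibria_iff (r α h s μ : ℝ)
    (hr : 0 < r) (hr1 : r < 1) (hα : 0 < α) (hh : 0 ≤ h) (hs0 : 0 ≤ s) (hs1 : s < 1)
    (hμ : μ = (1 - r) * (1 + h) / (r * (1 - s))) :
    ((∃ p q : ℝ × ℝ, p ≠ q ∧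
        (0 < p.1 ∧ 0 < p.2 ∧
          r * α * p.1 * p.2 * (1 - p.1 - p.2) - (1 + h) * p.1 = 0 ∧
          (1 - r) * α * p.1 * p.2 * (1 - p.1 - p.2) + (s - 1) * p.2 = 0) ∧
        (0 < q.1 ∧ 0 < q.2 ∧
          r * α * q.1 * q.2 * (1 - q.1 - q.2) - (1 + h) * q.1 = 0 ∧
          (1 - r) * α * q.1 * q.2 * (1 - q.1 - q.2) + (s - 1) * q.2 = 0)) ↔
      r * α * μ > 4 * (1 + μ) * (1 + h)) ∧
    (r * α * μ > 4 * (1 + μ) * (1 + h) ↔ 0 < 1 - 4 * (1 + μ) * (1 + h) / (r * α * μ)) :=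
  fhms_two_interior_equilibria_iff_general r α h s μ hr hr1 hα hh hs1 hμ
end

section
/- The determinant of the Jacobian of the FHMS model at an interior equilibrium E*_i = (f*, μ f*) equals -r(1-r) α² μ f*² (1 - 2(1+μ) f*)(1 - (1+μ) f*); hence E*_i is locally asymptotically stable if and only if (1 - 2(1+μ) f*)(1 - (1+μ) f*) < 0, i.e. 1/(2(1+μ)) < f* < 1/(1+μ). -/
/-! Expanding the 2×2 determinant and factoring gives the formula. Its prefactor
`r(1-r)α²μf²` is positive, because `μ > 0` for the admissible parameters, so the sign of the
determinant is opposite to that of `(1 - 2cf)(1 - cf)` with `c = 1 + μ > 0`; this quadratic in `f`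
is negative exactly strictly between its roots `1/(2c)` and `1/c`. -/

theorem det_fhms_jacobian {R : Type*} [CommRing R] (r α μ f : R) :
    Matrix.det
      (!![-(r * α * μ * f ^ 2), r * α * f * (1 - f - 2 * μ * f);
          (1 - r) * α * μ * f * (1 - 2 * f - μ * f), -((1 - r) * α * μ * f ^ 2)] :
        Matrix (Fin 2) (Fin 2) R)
      = -(r * (1 - r) * α ^ 2 * μ * f ^ 2 * (1 - 2 * (1 + μ) * f) * (1 - (1 + μ) * f)) := by
  rw [Matrix.det_fin_two_of]
  ring

theorem fhms_mu_pos {r h s : ℝ} (hr : 0 < r) (hr1 : r < 1) (hh : 0 ≤ h) (hs1 : s < 1) :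
    0 < (1 - r) * (1 + h) / (r * (1 - s)) := by
  have : 0 < 1 - r := sub_pos.2 hr1
  have : 0 < 1 - s := sub_pos.2 hs1
  positivity

theorem neg_mul_mul_pos_iff {K a b : ℝ} (hK : 0 < K) : 0 < -(K * a * b) ↔ a * b < 0 := by
  rw [mul_assoc, neg_pos]
  exact smul_neg_iff_of_pos_left hK

theorem mul_one_sub_neg_iff {c f : ℝ} (hc : 0 < c) :
    (1 - 2 * c * f) * (1 - c * f) < 0 ↔ 1 / (2 * c) < f ∧ f < 1 / c := by
  rw [div_lt_iff₀ (by positivity), lt_div_iff₀ hc, mul_neg_iff]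
  constructor
  · rintro (⟨h1, h2⟩ | ⟨h1, h2⟩)
    · nlinarith
    · constructor <;> linarith
  · rintro ⟨h1, h2⟩
    right
    constructor <;> linarith

theorem fhms_det_and_stability_general (r α h s μ f : ℝ)
    (hr : 0 < r) (hr1 : r < 1) (hα : 0 < α) (hh : 0 ≤ h) (hs1 : s < 1)
    (hμ : μ = (1 - r) * (1 + h) / (r * (1 - s)))
    (hf : 0 < f) :
    Matrix.det
      (!![-(r * α * μ * f ^ 2), r * α * f * (1 - f - 2 * μ * f);
          (1 - r) * α * μ * f * (1 - 2 * f - μ * f), -((1 - r) * α * μ * f ^ 2)] :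
        Matrix (Fin 2) (Fin 2) ℝ)
      = -(r * (1 - r) * α ^ 2 * μ * f ^ 2 * (1 - 2 * (1 + μ) * f) * (1 - (1 + μ) * f)) ∧
    (0 < -(r * (1 - r) * α ^ 2 * μ * f ^ 2 * (1 - 2 * (1 + μ) * f) * (1 - (1 + μ) * f)) ↔
      (1 - 2 * (1 + μ) * f) * (1 - (1 + μ) * f) < 0) ∧
    ((1 - 2 * (1 + μ) * f) * (1 - (1 + μ) * f) < 0 ↔
      1 / (2 * (1 + μ)) < f ∧ f < 1 / (1 + μ)) := by
  have hμpos : 0 < μ := hμ ▸ fhms_mu_pos hr hr1 hh hs1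
  have h1r : 0 < 1 - r := sub_pos.2 hr1
  have hK : 0 < r * (1 - r) * α ^ 2 * μ * f ^ 2 := by positivity
  exact ⟨det_fhms_jacobian r α μ f, neg_mul_mul_pos_iff hK,
    mul_one_sub_neg_iff (by positivity)⟩

/-- The determinant of the FHMS Jacobian at an interior equilibrium (f*, μ f*) equals
-r(1-r)α²μ f*²(1-2(1+μ)f*)(1-(1+μ)f*); since the trace is negative, the equilibrium
is locally asymptotically stable iff this determinant is positive, i.e.
1/(2(1+μ)) < f* < 1/(1+μ). -/
theorem fhms_det_and_stability (r α h s μ f : ℝ)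
    (hr : 0 < r) (hr1 : r < 1) (hα : 0 < α) (hh : 0 ≤ h) (hs0 : 0 ≤ s) (hs1 : s < 1)
    (hμ : μ = (1 - r) * (1 + h) / (r * (1 - s)))
    (hf : 0 < f)
    (heq1 : r * α * f * (μ * f) * (1 - f - μ * f) - (1 + h) * f = 0)
    (heq2 : (1 - r) * α * f * (μ * f) * (1 - f - μ * f) + (s - 1) * (μ * f) = 0) :
    Matrix.det
      (!![-(r * α * μ * f ^ 2), r * α * f * (1 - f - 2 * μ * f);
          (1 - r) * α * μ * f * (1 - 2 * f - μ * f), -((1 - r) * α * μ * f ^ 2)] :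
        Matrix (Fin 2) (Fin 2) ℝ)
      = -(r * (1 - r) * α ^ 2 * μ * f ^ 2 * (1 - 2 * (1 + μ) * f) * (1 - (1 + μ) * f)) ∧
    (0 < -(r * (1 - r) * α ^ 2 * μ * f ^ 2 * (1 - 2 * (1 + μ) * f) * (1 - (1 + μ) * f)) ↔
      (1 - 2 * (1 + μ) * f) * (1 - (1 + μ) * f) < 0) ∧
    ((1 - 2 * (1 + μ) * f) * (1 - (1 + μ) * f) < 0 ↔
      1 / (2 * (1 + μ)) < f ∧ f < 1 / (1 + μ)) :=
  fhms_det_and_stability_general r α h s μ f hr hr1 hα hh hs1 hμ hf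
end

section
/- In the FHMS model with weak Allee effect, the f-coordinate of any interior equilibrium is a positive root of G(f) = f³ - f²/(1+μ) + (1+h)/(r α μ (1+μ)) = 0, where μ = (1-r)(1+h)/(r(1-s)), and conversely every positive root f* of G with m* = μ f* gives an interior equilibrium. -/
/-! Subtracting the two equilibrium equations with weights `1 - r` and `r` eliminates the
Allee term `α f² m (1 - f - m)` and leaves a linear relation, which forces `m = μ f`. On the ray
`m = μ f` the first equation is `f` times `r α μ f² (1 - (1 + μ) f) - (1 + h)`, and dividing this
factor by `r α μ (1 + μ)` gives the cubic. Conversely, on that ray the first equation implies the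
second. -/

theorem cubic_eq_zero_iff {K μ c f : ℝ} (hK : K ≠ 0) (hμ : 1 + μ ≠ 0) :
    f ^ 3 - f ^ 2 / (1 + μ) + c / (K * (1 + μ)) = 0 ↔ K * f ^ 2 * (1 - f - μ * f) = c := by
  rw [← mul_right_inj' (mul_ne_zero hK hμ), mul_zero, ← sub_eq_zero (b := c)]
  constructor <;> intro h <;> field_simp at h ⊢ <;> linear_combination -h

theorem allee_eq_on_ray_iff {r α μ c f : ℝ} (hf : f ≠ 0) :
    r * α * f ^ 2 * (μ * f) * (1 - f - μ * f) - c * f = 0 ↔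
      r * α * μ * f ^ 2 * (1 - f - μ * f) = c := by
  have key : r * α * f ^ 2 * (μ * f) * (1 - f - μ * f) - c * f =
      f * (r * α * μ * f ^ 2 * (1 - f - μ * f) - c) := by ring
  rw [key, mul_eq_zero, or_iff_right hf, sub_eq_zero]

theorem second_eq_iff_eq_mul_of_first_eq {r s c D f m μ : ℝ} (hr : r ≠ 0) (hs : s ≠ 1)
    (hμ : μ = (1 - r) * c / (r * (1 - s))) (h₁ : r * D - c * f = 0) :
    (1 - r) * D + (s - 1) * m = 0 ↔ m = μ * f := by
  have hrs : r * (1 - s) ≠ 0 := mul_ne_zero hr (sub_ne_zero.2 hs.symm)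
  have key : r * ((1 - r) * D + (s - 1) * m) = r * (1 - s) * (μ * f - m) := by
    rw [hμ]; field_simp; linear_combination (1 - r) * h₁
  rw [← mul_right_inj' hr, mul_zero, key, mul_eq_zero, or_iff_right hrs, sub_eq_zero, eq_comm]

theorem fhms_allee_interior_equilibria_cubic_general (r α h s μ : ℝ)
    (hr : 0 < r) (hr1 : r < 1) (hα : 0 < α) (hh : 0 ≤ h) (hs1 : s < 1)
    (hμ : μ = (1 - r) * (1 + h) / (r * (1 - s))) :
    (∀ f m : ℝ, 0 < f → 0 < m →
      r * α * f ^ 2 * m * (1 - f - m) - (1 + h) * f = 0 →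
      (1 - r) * α * f ^ 2 * m * (1 - f - m) + (s - 1) * m = 0 →
      m = μ * f ∧
      f ^ 3 - f ^ 2 / (1 + μ) + (1 + h) / (r * α * μ * (1 + μ)) = 0) ∧
    (∀ f : ℝ, 0 < f →
      f ^ 3 - f ^ 2 / (1 + μ) + (1 + h) / (r * α * μ * (1 + μ)) = 0 →
      0 < μ * f ∧
      r * α * f ^ 2 * (μ * f) * (1 - f - μ * f) - (1 + h) * f = 0 ∧
      (1 - r) * α * f ^ 2 * (μ * f) * (1 - f - μ * f) + (s - 1) * (μ * f) = 0) := by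
  have hμpos : 0 < μ :=
    hμ ▸ div_pos (mul_pos (sub_pos.2 hr1) (by linarith)) (mul_pos hr (sub_pos.2 hs1))
  have hK : r * α * μ ≠ 0 := by positivity
  have h1μ : 1 + μ ≠ 0 := by positivity
  refine ⟨fun f m hf _ h₁ h₂ => ?_, fun f hf hG => ?_⟩
  · obtain rfl : m = μ * f :=
      (second_eq_iff_eq_mul_of_first_eq (D := α * f ^ 2 * m * (1 - f - m)) hr.ne' hs1.ne hμ
        (by linear_combination h₁)).1 (by linear_combination h₂)
    exact ⟨rfl, (cubic_eq_zero_iff hK h1μ).2 ((allee_eq_on_ray_iff hf.ne').1 h₁)⟩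
  · have h₁ := (allee_eq_on_ray_iff hf.ne').2 ((cubic_eq_zero_iff hK h1μ).1 hG)
    have h₂ := (second_eq_iff_eq_mul_of_first_eq (D := α * f ^ 2 * (μ * f) * (1 - f - μ * f))
      (m := μ * f) hr.ne' hs1.ne hμ (by linear_combination h₁)).2 rfl
    exact ⟨mul_pos hμpos hf, h₁, by linear_combination h₂⟩

/-- FHMS with weak Allee effect: interior equilibria correspond exactly to positive
roots of the cubic G(f) = f³ - f²/(1+μ) + (1+h)/(rαμ(1+μ)), with m = μ f. -/
theorem fhms_allee_interior_equilibria_cubic (r α h s μ : ℝ)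
    (hr : 0 < r) (hr1 : r < 1) (hα : 0 < α) (hh : 0 ≤ h) (hs0 : 0 ≤ s) (hs1 : s < 1)
    (hμ : μ = (1 - r) * (1 + h) / (r * (1 - s))) :
    (∀ f m : ℝ, 0 < f → 0 < m →
      r * α * f ^ 2 * m * (1 - f - m) - (1 + h) * f = 0 →
      (1 - r) * α * f ^ 2 * m * (1 - f - m) + (s - 1) * m = 0 →
      m = μ * f ∧
      f ^ 3 - f ^ 2 / (1 + μ) + (1 + h) / (r * α * μ * (1 + μ)) = 0) ∧
    (∀ f : ℝ, 0 < f →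
      f ^ 3 - f ^ 2 / (1 + μ) + (1 + h) / (r * α * μ * (1 + μ)) = 0 →
      0 < μ * f ∧
      r * α * f ^ 2 * (μ * f) * (1 - f - μ * f) - (1 + h) * f = 0 ∧
      (1 - r) * α * f ^ 2 * (μ * f) * (1 - f - μ * f) + (s - 1) * (μ * f) = 0) :=
  fhms_allee_interior_equilibria_cubic_general r α h s μ hr hr1 hα hh hs1 hμ
end

section
/- For the FHMS model with weak Allee effect, if 0 ≤ f(0) < 1 then f(t) < 1 for all t ≥ 0; and if f(0) ≥ 1 then f(t) ≤ f(0) for all t ≥ 0. In particular all solutions with nonnegative initial data have bounded f-component. -/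
/-!
Whenever `f ≥ 1` (and `m ≥ 0`) the Allee term `r α f² m (1 - f - m)` is nonpositive, so
`f' ≤ -(1 + h) f < 0`. Hence every level `C ≥ 1` is a barrier that `f` can only cross downwards:
a fence argument keeps `f ≤ C` once `f 0 ≤ C`, and `f` cannot touch the level `1` from below,
since a negative derivative at the touching time would put `f` above `1` just before it.
-/

open Set Filter Topology

theorem HasDerivAt.eventually_nhdsLT_lt_of_neg {g : ℝ → ℝ} {g' t : ℝ} (hg : HasDerivAt g g' t)
    (hneg : g' < 0) : ∀ᶠ z in 𝓝[<] t, g t < g z := by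
  have hslope := (hasDerivAt_iff_tendsto_slope.mp hg).mono_left (nhdsLT_le_nhdsNE t)
  filter_upwards [hslope.eventually (eventually_lt_nhds hneg), self_mem_nhdsWithin]
    with z hz hzt
  rw [slope_def_field, div_neg_iff] at hz
  rcases hz with ⟨hdiff, -⟩ | ⟨-, hzt'⟩
  · linarith
  · linarith [mem_Iio.mp hzt]

section Barrier

variable {g g' : ℝ → ℝ} {C : ℝ}

theorem le_of_hasDerivAt_neg_at_level (hg : ∀ t, 0 ≤ t → HasDerivAt g (g' t) t)
    (hneg : ∀ t, 0 ≤ t → g t = C → g' t < 0) (h0 : g 0 ≤ C) {t : ℝ} (ht : 0 ≤ t) :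
    g t ≤ C :=
  image_le_of_deriv_right_lt_deriv_boundary
    (fun x hx => (hg x hx.1).continuousAt.continuousWithinAt)
    (fun x hx => (hg x hx.1).hasDerivWithinAt) h0 (fun _ => hasDerivAt_const _ C)
    (fun x hx hgx => hneg x hx.1 hgx) ⟨ht, le_rfl⟩

theorem lt_of_hasDerivAt_neg_at_level (hg : ∀ t, 0 ≤ t → HasDerivAt g (g' t) t)
    (hneg : ∀ t, 0 ≤ t → g t = C → g' t < 0) (h0 : g 0 < C) {t : ℝ} (ht : 0 ≤ t) :
    g t < C := by
  have hle : ∀ x, 0 ≤ x → g x ≤ C := fun x hx => le_of_hasDerivAt_neg_at_level hg hneg h0.le hx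
  refine (hle t ht).lt_of_ne fun heq => ?_
  have htpos : 0 < t := ht.lt_of_ne (by rintro rfl; exact h0.ne heq)
  obtain ⟨z, hgz, hz⟩ := (((hg t ht).eventually_nhdsLT_lt_of_neg (hneg t ht heq)).and
    (Ioo_mem_nhdsLT htpos)).exists
  exact (hle z hz.1.le).not_gt (heq ▸ hgz)

end Barrier

theorem allee_f_rate_neg {r α h f m : ℝ} (hr : 0 ≤ r) (hα : 0 ≤ α) (hh : 0 ≤ h) (hf : 1 ≤ f)
    (hm : 0 ≤ m) : r * α * f ^ 2 * m * (1 - f - m) - (1 + h) * f < 0 := by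
  have hexcess : 0 ≤ f + m - 1 := by linarith
  have hallee : 0 ≤ r * α * f ^ 2 * m * (f + m - 1) := by positivity
  nlinarith

theorem fhms_allee_f_bounded_general (r α h : ℝ)
    (hr : 0 < r) (hα : 0 < α) (hh : 0 ≤ h)
    (f m : ℝ → ℝ)
    (hf : ∀ t, 0 ≤ t → HasDerivAt f
      (r * α * (f t) ^ 2 * m t * (1 - f t - m t) - (1 + h) * f t) t)
    (hpos : ∀ t, 0 ≤ t → 0 ≤ f t ∧ 0 ≤ m t) :
    (0 ≤ f 0 → f 0 < 1 → ∀ t, 0 ≤ t → f t < 1) ∧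
    (1 ≤ f 0 → ∀ t, 0 ≤ t → f t ≤ f 0) := by
  have hrate : ∀ t, 0 ≤ t → 1 ≤ f t →
      r * α * (f t) ^ 2 * m t * (1 - f t - m t) - (1 + h) * f t < 0 :=
    fun t ht hft => allee_f_rate_neg hr.le hα.le hh hft (hpos t ht).2
  exact ⟨fun _ h01 _ ht =>
      lt_of_hasDerivAt_neg_at_level hf (fun t ht heq => hrate t ht heq.ge) h01 ht,
    fun h01 _ ht =>
      le_of_hasDerivAt_neg_at_level hf (fun t ht heq => hrate t ht (heq ▸ h01)) le_rfl ht⟩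

/-- FHMS with weak Allee effect: the f-component is bounded. If f(0) < 1 then
f(t) < 1 for all t ≥ 0; if f(0) ≥ 1 then f(t) ≤ f(0) for all t ≥ 0. -/
theorem fhms_allee_f_bounded (r α h s : ℝ)
    (hr : 0 < r) (hr1 : r < 1) (hα : 0 < α) (hh : 0 ≤ h) (hs0 : 0 ≤ s) (hs1 : s < 1)
    (f m : ℝ → ℝ)
    (hf : ∀ t, 0 ≤ t → HasDerivAt f
      (r * α * (f t) ^ 2 * m t * (1 - f t - m t) - (1 + h) * f t) t)
    (hm : ∀ t, 0 ≤ t → HasDerivAt m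
      ((1 - r) * α * (f t) ^ 2 * m t * (1 - f t - m t) + (s - 1) * m t) t)
    (hpos : ∀ t, 0 ≤ t → 0 ≤ f t ∧ 0 ≤ m t) :
    (0 ≤ f 0 → f 0 < 1 → ∀ t, 0 ≤ t → f t < 1) ∧
    (1 ≤ f 0 → ∀ t, 0 ≤ t → f t ≤ f 0) :=
  fhms_allee_f_bounded_general r α h hr hα hh f m hf hpos
end

section
/- At the degenerate interior equilibrium E* = (2/(3(1+μ)), 2μ/(3(1+μ))) of the FHMS model with weak Allee effect (where the two interior equilibria collide), the Jacobian has determinant zero. -/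
/-!
Write `G f m = α f² m (1 - f - m)`, so that the vector field is `(r G - (1 + h) f, (1 - r) G - (1 - s) m)`.
Because `μ r (1 - s) = (1 - r)(1 + h)`, the Jacobian determinant collapses to
`(1 - s)(1 + h - r (G_f + μ G_m))`, and `G_f + μ G_m` is the derivative of `φ f = G f (μ f) = f ψ f`
with `ψ f = α μ f² (1 - (1 + μ) f)`. Interior equilibria solve `ψ f = (1 + h) / r`; at the double
root `f* = 2 / (3 (1 + μ))` also `ψ' f* = 0`, hence `φ' f* = ψ f* = (1 + h) / r` and the determinant vanishes.
-/

def fhmsGrowth (α f m : ℝ) : ℝ := α * f ^ 2 * m * (1 - f - m)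

theorem hasDerivAt_fhmsGrowth_left (α f m : ℝ) :
    HasDerivAt (fun x => fhmsGrowth α x m) (α * m * (2 * f * (1 - f - m) - f ^ 2)) f := by
  have h := (((hasDerivAt_pow 2 f).const_mul α).mul_const m).mul
    (((hasDerivAt_id' f).const_sub 1).sub_const m)
  exact h.congr_deriv (by push_cast; ring)

theorem hasDerivAt_fhmsGrowth_right (α f m : ℝ) :
    HasDerivAt (fun y => fhmsGrowth α f y) (α * f ^ 2 * (1 - f - 2 * m)) m := by
  have h := (hasDerivAt_const_mul (α * f ^ 2)).mul ((hasDerivAt_id' m).const_sub (1 - f))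
  exact h.congr_deriv (by ring)

theorem fhms_jacobian_det (r α k s μ f m : ℝ) (hμ : μ * (r * (1 - s)) = (1 - r) * k) :
    (!![deriv (fun x => r * fhmsGrowth α x m - k * x) f,
        deriv (fun y => r * fhmsGrowth α f y - k * f) m;
        deriv (fun x => (1 - r) * fhmsGrowth α x m + (s - 1) * m) f,
        deriv (fun y => (1 - r) * fhmsGrowth α f y + (s - 1) * y) m] :
        Matrix (Fin 2) (Fin 2) ℝ).det
      = (1 - s) * (k - r * (α * m * (2 * f * (1 - f - m) - f ^ 2)
          + μ * (α * f ^ 2 * (1 - f - 2 * m)))) := by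
  have hGf := hasDerivAt_fhmsGrowth_left α f m
  have hGm := hasDerivAt_fhmsGrowth_right α f m
  have hF1f : deriv (fun x => r * fhmsGrowth α x m - k * x) f
      = r * (α * m * (2 * f * (1 - f - m) - f ^ 2)) - k :=
    ((hGf.const_mul r).sub (hasDerivAt_const_mul k)).deriv
  have hF1m : deriv (fun y => r * fhmsGrowth α f y - k * f) m
      = r * (α * f ^ 2 * (1 - f - 2 * m)) :=
    ((hGm.const_mul r).sub_const _).deriv
  have hF2f : deriv (fun x => (1 - r) * fhmsGrowth α x m + (s - 1) * m) f
      = (1 - r) * (α * m * (2 * f * (1 - f - m) - f ^ 2)) :=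
    ((hGf.const_mul (1 - r)).add_const _).deriv
  have hF2m : deriv (fun y => (1 - r) * fhmsGrowth α f y + (s - 1) * y) m
      = (1 - r) * (α * f ^ 2 * (1 - f - 2 * m)) + (s - 1) :=
    ((hGm.const_mul (1 - r)).add (hasDerivAt_const_mul (s - 1))).deriv
  rw [Matrix.det_fin_two_of, hF1f, hF1m, hF2f, hF2m]
  linear_combination α * f ^ 2 * (1 - f - 2 * m) * hμ

theorem fhmsGrowth_ray_slope_at_fold (α μ : ℝ) (hμ : 1 + μ ≠ 0) :
    α * (2 * μ / (3 * (1 + μ))) *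
        (2 * (2 / (3 * (1 + μ))) * (1 - 2 / (3 * (1 + μ)) - 2 * μ / (3 * (1 + μ)))
          - (2 / (3 * (1 + μ))) ^ 2)
      + μ * (α * (2 / (3 * (1 + μ))) ^ 2
          * (1 - 2 / (3 * (1 + μ)) - 2 * (2 * μ / (3 * (1 + μ)))))
      = 4 * α * μ / (27 * (1 + μ) ^ 2) := by
  field_simp
  ring

theorem fhms_loss_rate_of_degenerate (r α μ k : ℝ) (hr : r ≠ 0) (hα : α ≠ 0) (hμ : μ ≠ 0)
    (hμ' : 1 + μ ≠ 0) (hdeg : k / (r * α * μ * (1 + μ)) = 4 / (27 * (1 + μ) ^ 3)) :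
    k = r * (4 * α * μ / (27 * (1 + μ) ^ 2)) := by
  rw [div_eq_iff (by positivity)] at hdeg
  rw [hdeg]
  field_simp

theorem fhms_allee_degenerate_det_zero_general (r α h s μ : ℝ)
    (hr : 0 < r) (hr1 : r < 1) (hα : 0 < α) (hh : 0 ≤ h) (hs1 : s < 1)
    (hμ : μ = (1 - r) * (1 + h) / (r * (1 - s)))
    (hdeg : (1 + h) / (r * α * μ * (1 + μ)) = 4 / (27 * (1 + μ) ^ 3))
    (F1 F2 : ℝ → ℝ → ℝ)
    (hF1 : ∀ f m, F1 f m = r * α * f ^ 2 * m * (1 - f - m) - (1 + h) * f)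
    (hF2 : ∀ f m, F2 f m = (1 - r) * α * f ^ 2 * m * (1 - f - m) + (s - 1) * m) :
    Matrix.det
      (!![deriv (fun x => F1 x (2 * μ / (3 * (1 + μ)))) (2 / (3 * (1 + μ))),
          deriv (fun y => F1 (2 / (3 * (1 + μ))) y) (2 * μ / (3 * (1 + μ)));
          deriv (fun x => F2 x (2 * μ / (3 * (1 + μ)))) (2 / (3 * (1 + μ))),
          deriv (fun y => F2 (2 / (3 * (1 + μ))) y) (2 * μ / (3 * (1 + μ)))] :
        Matrix (Fin 2) (Fin 2) ℝ) = 0 := by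
  have hs : 0 < 1 - s := by linarith
  have hμpos : 0 < μ := hμ ▸ div_pos (mul_pos (by linarith) (by linarith)) (mul_pos hr hs)
  have hμrs : μ * (r * (1 - s)) = (1 - r) * (1 + h) := by
    rw [hμ]
    field_simp
  obtain rfl : F1 = fun f m => r * fhmsGrowth α f m - (1 + h) * f := by
    funext f m
    rw [hF1, fhmsGrowth]
    ring
  obtain rfl : F2 = fun f m => (1 - r) * fhmsGrowth α f m + (s - 1) * m := by
    funext f m
    rw [hF2, fhmsGrowth]
    ring
  beta_reduce
  rw [fhms_jacobian_det r α (1 + h) s μ _ _ hμrs, fhmsGrowth_ray_slope_at_fold α μ (by positivity),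
    fhms_loss_rate_of_degenerate r α μ (1 + h) hr.ne' hα.ne' hμpos.ne' (by positivity) hdeg,
    sub_self, mul_zero]

/-- FHMS with weak Allee effect: at the degenerate interior equilibrium
E* = (2/(3(1+μ)), 2μ/(3(1+μ))), the Jacobian of the vector field has zero determinant. -/
theorem fhms_allee_degenerate_det_zero (r α h s μ : ℝ)
    (hr : 0 < r) (hr1 : r < 1) (hα : 0 < α) (hh : 0 ≤ h) (hs0 : 0 ≤ s) (hs1 : s < 1)
    (hμ : μ = (1 - r) * (1 + h) / (r * (1 - s)))
    (hdeg : (1 + h) / (r * α * μ * (1 + μ)) = 4 / (27 * (1 + μ) ^ 3))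
    (F1 F2 : ℝ → ℝ → ℝ)
    (hF1 : ∀ f m, F1 f m = r * α * f ^ 2 * m * (1 - f - m) - (1 + h) * f)
    (hF2 : ∀ f m, F2 f m = (1 - r) * α * f ^ 2 * m * (1 - f - m) + (s - 1) * m) :
    Matrix.det
      (!![deriv (fun x => F1 x (2 * μ / (3 * (1 + μ)))) (2 / (3 * (1 + μ))),
          deriv (fun y => F1 (2 / (3 * (1 + μ))) y) (2 * μ / (3 * (1 + μ)));
          deriv (fun x => F2 x (2 * μ / (3 * (1 + μ)))) (2 / (3 * (1 + μ))),
          deriv (fun y => F2 (2 / (3 * (1 + μ))) y) (2 * μ / (3 * (1 + μ)))] :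
        Matrix (Fin 2) (Fin 2) ℝ) = 0 :=
  fhms_allee_degenerate_det_zero_general r α h s μ hr hr1 hα hh hs1 hμ hdeg F1 F2 hF1 hF2
end

section
/- For the FHMS model (no Allee effect), the Jacobian at any interior equilibrium has both diagonal entries strictly negative (J11 = -r α μ f*² < 0 and J22 = -(1-r) α μ f*² < 0); hence the necessary condition for Turing instability (diagonal entries of opposite sign) fails, and the spatially extended FHMS system admits no Turing instability. -/
/-!
Both equations of the FHMS model have the form `x' = x · g(x, y)`. At an interior equilibrium the
per-capita rates vanish, so each diagonal Jacobian entry is the density times the partial derivative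
of its own per-capita rate, which is negative because of the crowding factor `1 - f - m`. The
equilibrium equations themselves force `1 - f - m > 0` and `m > 0`. With both diagonal entries
negative, no positive diffusion weights make `d₂ J₁₁ + d₁ J₂₂` positive.
-/

theorem HasDerivAt.id_mul_of_eq_zero {𝕜 : Type*} [NontriviallyNormedField 𝕜] {g : 𝕜 → 𝕜}
    {g' x : 𝕜} (hg : HasDerivAt g g' x) (hgx : g x = 0) :
    HasDerivAt (fun y => y * g y) (x * g') x := by
  simpa [hgx] using (hasDerivAt_id' x).fun_mul hg

/-- The necessary condition for diffusion-driven (Turing) instability on the diagonal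
entries `J₁₁, J₂₂` of a stable Jacobian, with diffusion coefficients `d₁, d₂`. -/
def TuringCondition (J₁₁ J₂₂ : ℝ) : Prop :=
  ∃ d₁ d₂ : ℝ, 0 < d₁ ∧ 0 < d₂ ∧ 0 < d₂ * J₁₁ + d₁ * J₂₂

theorem TuringCondition.pos_or_pos {J₁₁ J₂₂ : ℝ} (h : TuringCondition J₁₁ J₂₂) :
    0 < J₁₁ ∨ 0 < J₂₂ := by
  obtain ⟨d₁, d₂, hd₁, hd₂, hpos⟩ := h
  by_contra! hJ
  nlinarith [mul_nonpos_of_nonneg_of_nonpos hd₂.le hJ.1, mul_nonpos_of_nonneg_of_nonpos hd₁.le hJ.2]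

section FHMS

variable {r α h s f m : ℝ}

theorem fhms_pos_of_percapita_eq_zero (hr : 0 < r) (hr1 : r < 1) (hα : 0 < α) (hh : 0 ≤ h)
    (hs1 : s < 1) (hf : 0 < f) (h₁ : r * α * m * (1 - f - m) - (1 + h) = 0)
    (h₂ : (1 - r) * α * f * (1 - f - m) + (s - 1) = 0) : 0 < m := by
  have hr' : 0 < 1 - r := sub_pos.2 hr1
  have hcrowd : 0 < 1 - f - m :=
    pos_of_mul_pos_right (show 0 < (1 - r) * α * f * (1 - f - m) by linarith) (by positivity)
  exact pos_of_mul_pos_right (show 0 < r * α * (1 - f - m) * m by linarith) (by positivity)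

theorem fhms_hasDerivAt_f (h₁ : r * α * m * (1 - f - m) - (1 + h) = 0) :
    HasDerivAt (fun x => r * α * x * m * (1 - x - m) - (1 + h) * x) (-(r * α * m * f)) f := by
  have hg := ((((hasDerivAt_id' f).const_sub 1).sub_const m).const_mul (r * α * m)).sub_const (1 + h)
  rw [show (fun x => r * α * x * m * (1 - x - m) - (1 + h) * x) =
      fun x => x * (r * α * m * (1 - x - m) - (1 + h)) from funext fun x => by ring]
  exact (hg.id_mul_of_eq_zero h₁).congr_deriv (by ring)

theorem fhms_hasDerivAt_m (h₂ : (1 - r) * α * f * (1 - f - m) + (s - 1) = 0) :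
    HasDerivAt (fun y => (1 - r) * α * f * y * (1 - f - y) + (s - 1) * y)
      (-((1 - r) * α * f * m)) m := by
  have hg := (((hasDerivAt_id' m).const_sub (1 - f)).const_mul ((1 - r) * α * f)).add_const (s - 1)
  rw [show (fun y => (1 - r) * α * f * y * (1 - f - y) + (s - 1) * y) =
      fun y => y * ((1 - r) * α * f * (1 - f - y) + (s - 1)) from funext fun y => by ring]
  exact (hg.id_mul_of_eq_zero h₂).congr_deriv (by ring)

end FHMS

theorem fhms_no_turing_instability_general (r α h s μ f : ℝ)
    (hr : 0 < r) (hr1 : r < 1) (hα : 0 < α) (hh : 0 ≤ h) (hs1 : s < 1)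
    (hf : 0 < f)
    (heq1 : r * α * f * (μ * f) * (1 - f - μ * f) - (1 + h) * f = 0)
    (heq2 : (1 - r) * α * f * (μ * f) * (1 - f - μ * f) + (s - 1) * (μ * f) = 0)
    (F1 F2 : ℝ → ℝ → ℝ)
    (hF1 : ∀ x y, F1 x y = r * α * x * y * (1 - x - y) - (1 + h) * x)
    (hF2 : ∀ x y, F2 x y = (1 - r) * α * x * y * (1 - x - y) + (s - 1) * y) :
    deriv (fun x => F1 x (μ * f)) f = -(r * α * μ * f ^ 2) ∧
    deriv (fun y => F2 f y) (μ * f) = -((1 - r) * α * μ * f ^ 2) ∧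
    -(r * α * μ * f ^ 2) < 0 ∧
    -((1 - r) * α * μ * f ^ 2) < 0 ∧
    ¬ ∃ d1 d2 : ℝ, 0 < d1 ∧ 0 < d2 ∧
        0 < d2 * (-(r * α * μ * f ^ 2)) + d1 * (-((1 - r) * α * μ * f ^ 2)) := by
  have h₁ : r * α * (μ * f) * (1 - f - μ * f) - (1 + h) = 0 :=
    (mul_eq_zero.1 (by linear_combination heq1)).resolve_left hf.ne'
  have hm : μ * f ≠ 0 := fun hm => by simp only [hm, mul_zero, zero_mul] at h₁; linarith
  have h₂ : (1 - r) * α * f * (1 - f - μ * f) + (s - 1) = 0 :=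
    (mul_eq_zero.1 (by linear_combination heq2)).resolve_left hm
  have hμ : 0 < μ :=
    pos_of_mul_pos_left (fhms_pos_of_percapita_eq_zero hr hr1 hα hh hs1 hf h₁ h₂) hf.le
  have hJ₁₁ : -(r * α * μ * f ^ 2) < 0 := neg_neg_of_pos (by positivity)
  have hJ₂₂ : -((1 - r) * α * μ * f ^ 2) < 0 :=
    have hr' : 0 < 1 - r := sub_pos.2 hr1
    neg_neg_of_pos (by positivity)
  refine ⟨?_, ?_, hJ₁₁, hJ₂₂, fun hT => (TuringCondition.pos_or_pos hT).elim
    (lt_asymm hJ₁₁) (lt_asymm hJ₂₂)⟩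
  · rw [show (fun x => F1 x (μ * f)) = _ from funext fun x => hF1 x _,
      (fhms_hasDerivAt_f h₁).deriv]
    ring
  · rw [show (fun y => F2 f y) = _ from funext fun y => hF2 f y, (fhms_hasDerivAt_m h₂).deriv]
    ring

/-- FHMS (no Allee effect): at any interior equilibrium both diagonal entries of the
Jacobian are strictly negative, so the necessary condition for Turing instability
(d2 J11 + d1 J22 > 0 for some positive d1, d2) fails. -/
theorem fhms_no_turing_instability (r α h s μ f : ℝ)
    (hr : 0 < r) (hr1 : r < 1) (hα : 0 < α) (hh : 0 ≤ h) (hs0 : 0 ≤ s) (hs1 : s < 1)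
    (hμ : μ = (1 - r) * (1 + h) / (r * (1 - s)))
    (hf : 0 < f)
    (heq1 : r * α * f * (μ * f) * (1 - f - μ * f) - (1 + h) * f = 0)
    (heq2 : (1 - r) * α * f * (μ * f) * (1 - f - μ * f) + (s - 1) * (μ * f) = 0)
    (F1 F2 : ℝ → ℝ → ℝ)
    (hF1 : ∀ x y, F1 x y = r * α * x * y * (1 - x - y) - (1 + h) * x)
    (hF2 : ∀ x y, F2 x y = (1 - r) * α * x * y * (1 - x - y) + (s - 1) * y) :
    deriv (fun x => F1 x (μ * f)) f = -(r * α * μ * f ^ 2) ∧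
    deriv (fun y => F2 f y) (μ * f) = -((1 - r) * α * μ * f ^ 2) ∧
    -(r * α * μ * f ^ 2) < 0 ∧
    -((1 - r) * α * μ * f ^ 2) < 0 ∧
    ¬ ∃ d1 d2 : ℝ, 0 < d1 ∧ 0 < d2 ∧
        0 < d2 * (-(r * α * μ * f ^ 2)) + d1 * (-((1 - r) * α * μ * f ^ 2)) :=
  fhms_no_turing_instability_general r α h s μ f hr hr1 hα hh hs1 hf heq1 heq2 F1 F2 hF1 hF2
end
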